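/- Let p : Bool × Bool → ℝ be a joint probability distribution of a pair (X, Y) of boolean random variables (p ≥ 0, summing to 1) such that X is uniform, i.e., p(false,false) + p(false,true) = 1/2, and such that Prob(X = Y) = p(false,false) + p(true,true) ≥ 1/2 + δ for some δ with 0 ≤ δ ≤ 1/2. Then the mutual information I(X:Y) = H₂(X) + H₂(Y) − H₂(X,Y) satisfies I(X:Y) ≥ 1 − H(1/2 + δ), where H₂ denotes base-2 Shannon entropy of the corresponding (marginal or joint) distribution. (Fano's inequality, simple boolean form.) -/

import Mathlib

open Matrix BigOperators Kronecker
open scoped ComplexOrder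

noncomputable section
open Classical

/-- The positive semidefinite square root of a matrix (junk value `0` if not PSD). -/
def msqrt {d : Type*} [Fintype d] [DecidableEq d] (A : Matrix d d ℂ) : Matrix d d ℂ :=
  if h : A.PosSemidef then
    (h.1.eigenvectorUnitary : Matrix d d ℂ) * diagonal ((↑) ∘ (Real.sqrt ·) ∘ h.1.eigenvalues) *
      (star (h.1.eigenvectorUnitary : Matrix d d ℂ)) else 0

/-- The trace norm `Tr √(AᴴA)` of a complex matrix. -/
def traceNorm {d : Type*} [Fintype d] [DecidableEq d] (A : Matrix d d ℂ) : ℝ :=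
  ((msqrt (Aᴴ * A)).trace).re

/-- `ρ` is a density matrix: positive semidefinite with trace `1`. -/
def IsDensityMatrix {d : Type*} [Fintype d] [DecidableEq d] (ρ : Matrix d d ℂ) : Prop :=
  ρ.PosSemidef ∧ ρ.trace = 1

/-- Von Neumann entropy, base 2 (junk value `0` if not Hermitian). -/
def vnEntropy {d : Type*} [Fintype d] [DecidableEq d] (ρ : Matrix d d ℂ) : ℝ :=
  if h : ρ.IsHermitian then -∑ i, (h.eigenvalues i) * Real.logb 2 (h.eigenvalues i) else 0

/-- The binary entropy function, base 2. -/
def binEntropy (p : ℝ) : ℝ := -p * Real.logb 2 p - (1 - p) * Real.logb 2 (1 - p)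

/-- Fidelity of two matrices: `(Tr √(√ρ₁ ρ₂ √ρ₁))²`. -/
def fidelity {d : Type*} [Fintype d] [DecidableEq d] (ρ₁ ρ₂ : Matrix d d ℂ) : ℝ :=
  (((msqrt (msqrt ρ₁ * ρ₂ * msqrt ρ₁)).trace).re) ^ 2

/-- Partial trace over the second tensor factor. -/
def ptraceSnd {m k : ℕ} (ρ : Matrix (Fin m × Fin k) (Fin m × Fin k) ℂ) :
    Matrix (Fin m) (Fin m) ℂ :=
  Matrix.of fun i j => ∑ l : Fin k, ρ (i, l) (j, l)

end

/-! Since `I(X:Y) = H(X) - H(X|Y)` and `H(X) = 1`, it suffices to bound `H(X|Y)` by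
`H(1/2 + δ)`. Grouping by `Y`, `H(X|Y)` is the average over `y` of the binary entropies of the
error probabilities `P(X ≠ y | Y = y)`; by concavity of `H` this is at most the binary entropy of
their average `P(X ≠ Y) ≤ 1/2 - δ`, and `H` is increasing on `[0, 1/2]` and symmetric about
`1/2`. -/

open Real (negMulLog)

lemma negMulLog_add_negMulLog {x y : ℝ} (hx : 0 ≤ x) (hy : 0 ≤ y) :
    negMulLog x + negMulLog y = negMulLog (x + y) + (x + y) * Real.binEntropy (y / (x + y)) := by
  rcases (add_nonneg hx hy).eq_or_lt with hs | hs
  · obtain ⟨rfl, rfl⟩ : x = 0 ∧ y = 0 := ⟨by linarith, by linarith⟩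
    simp
  have hsplit : ∀ z, negMulLog z = negMulLog ((x + y) * (z / (x + y))) := fun z => by
    rw [mul_div_cancel₀ z hs.ne']
  have hcompl : 1 - y / (x + y) = x / (x + y) := by field_simp; ring
  rw [Real.binEntropy_eq_negMulLog_add_negMulLog_one_sub, hcompl, hsplit x, hsplit y,
    Real.negMulLog_mul, Real.negMulLog_mul]
  field_simp
  ring

/-- `H(X,Y) ≤ H(Y) + H(P(X ≠ Y))` for the law `a, b, c, d` of `(X, Y)` on
`(0,0), (0,1), (1,0), (1,1)`. -/
lemma negMulLog_sum_le_add_binEntropy {a b c d : ℝ} (ha : 0 ≤ a) (hb : 0 ≤ b) (hc : 0 ≤ c)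
    (hd : 0 ≤ d) (habcd : a + b + c + d = 1) :
    negMulLog a + negMulLog b + negMulLog c + negMulLog d ≤
      negMulLog (a + c) + negMulLog (b + d) + Real.binEntropy (b + c) := by
  have hac := negMulLog_add_negMulLog ha hc
  have hdb := negMulLog_add_negMulLog hd hb
  rw [add_comm d b] at hdb
  have hjensen := Real.strictConcave_binEntropy.concaveOn.2
    (⟨by positivity, div_le_one_of_le₀ (by linarith) (by positivity)⟩ : c / (a + c) ∈ Set.Icc 0 1)
    (⟨by positivity, div_le_one_of_le₀ (by linarith) (by positivity)⟩ : b / (b + d) ∈ Set.Icc 0 1)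
    (add_nonneg ha hc) (add_nonneg hb hd) (by linarith)
  have hmix : (a + c) • (c / (a + c)) + (b + d) • (b / (b + d)) = b + c := by
    simp only [smul_eq_mul]
    rw [mul_div_cancel_of_imp' fun h => by linarith, mul_div_cancel_of_imp' fun h => by linarith]
    ring
  rw [hmix] at hjensen
  simp only [smul_eq_mul] at hjensen
  linarith

lemma binEntropy_le_binEntropy_two_inv_add {e δ : ℝ} (he : 0 ≤ e) (hδ : 0 ≤ δ)
    (heδ : e ≤ 2⁻¹ - δ) : Real.binEntropy e ≤ Real.binEntropy (2⁻¹ + δ) := by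
  rw [Real.binEntropy_two_inv_add]
  exact Real.binEntropy_strictMonoOn.monotoneOn ⟨he, by linarith⟩ ⟨by linarith, by linarith⟩ heδ

lemma neg_mul_logb_two (x : ℝ) : -(x * Real.logb 2 x) = negMulLog x / Real.log 2 := by
  rw [Real.logb, Real.negMulLog]
  ring

lemma binEntropy_eq_div_log_two (p : ℝ) : binEntropy p = Real.binEntropy p / Real.log 2 := by
  rw [binEntropy, Real.binEntropy_eq_negMulLog_add_negMulLog_one_sub, Real.negMulLog,
    Real.negMulLog, Real.logb, Real.logb]
  ring

lemma negMulLog_two_inv : negMulLog 2⁻¹ = Real.log 2 / 2 := by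
  rw [Real.negMulLog, Real.log_inv]
  ring

theorem fano_boolean_general (p : Bool × Bool → ℝ) (δ : ℝ)
    (hp0 : ∀ ω, 0 ≤ p ω) (hp1 : ∑ ω, p ω = 1)
    (hX : p (false, false) + p (false, true) = 1 / 2)
    (hδ0 : 0 ≤ δ)
    (hcorr : p (false, false) + p (true, true) ≥ 1 / 2 + δ) :
    (∑ b : Bool, -((p (b, false) + p (b, true)) *
        Real.logb 2 (p (b, false) + p (b, true)))) +
      (∑ b : Bool, -((p (false, b) + p (true, b)) *
        Real.logb 2 (p (false, b) + p (true, b)))) -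
      (∑ ω : Bool × Bool, -(p ω * Real.logb 2 (p ω))) ≥
    1 - binEntropy (1 / 2 + δ) := by
  simp only [Fintype.sum_prod_type, Fintype.sum_bool] at hp1 ⊢
  have hXtrue : p (true, false) + p (true, true) = 1 / 2 := by linarith
  have hjoint := negMulLog_sum_le_add_binEntropy (hp0 _) (hp0 _) (hp0 _) (hp0 _)
    (by linarith : p (false, false) + p (false, true) + p (true, false) + p (true, true) = 1)
  have herror := binEntropy_le_binEntropy_two_inv_add (add_nonneg (hp0 (false, true))
    (hp0 (true, false))) hδ0 (by norm_num at hcorr ⊢; linarith)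
  simp only [neg_mul_logb_two, binEntropy_eq_div_log_two, hX, hXtrue, one_div,
    negMulLog_two_inv]
  field_simp at herror ⊢
  linarith

/-- **Fano's inequality** (simple boolean form): if `X` is a uniform boolean random
variable and `Prob(X = Y) ≥ 1/2 + δ`, then `I(X:Y) ≥ 1 - H(1/2 + δ)`. -/
theorem fano_boolean (p : Bool × Bool → ℝ) (δ : ℝ)
    (hp0 : ∀ ω, 0 ≤ p ω) (hp1 : ∑ ω, p ω = 1)
    (hX : p (false, false) + p (false, true) = 1 / 2)
    (hδ0 : 0 ≤ δ) (hδ : δ ≤ 1 / 2)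
    (hcorr : p (false, false) + p (true, true) ≥ 1 / 2 + δ) :
    (∑ b : Bool, -((p (b, false) + p (b, true)) *
        Real.logb 2 (p (b, false) + p (b, true)))) +
      (∑ b : Bool, -((p (false, b) + p (true, b)) *
        Real.logb 2 (p (false, b) + p (true, b)))) -
      (∑ ω : Bool × Bool, -(p ω * Real.logb 2 (p ω))) ≥
    1 - binEntropy (1 / 2 + δ) :=
  fano_boolean_general p δ hp0 hp1 hX hδ0 hcorr
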